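/- Let m ≥ 1 and let h₁,…,h_m be nonzero integers; set p_X(z) := 2^{-m}·|{(ε₁,…,ε_m) ∈ {0,1}^m : ε₁h₁+⋯+ε_mh_m = z}| for z ∈ ℤ, and p_Y(j) := C(m,j)/2^m for 0 ≤ j ≤ m (and 0 otherwise). Then the decreasing rearrangement of p_Y majorizes that of p_X; concretely, for every finite set S ⊆ ℤ there exists a finite set T ⊆ ℤ with |T| = |S| such that Σ_{z∈S} p_X(z) ≤ Σ_{j∈T} p_Y(j). Moreover, the decreasing rearrangements of p_X and p_Y coincide if and only if |h₁| = |h₂| = ⋯ = |h_m|. -/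

import Mathlib

open scoped BigOperators

/-- Probability mass function of `h₁X₁+⋯+h_mX_m`, where `X₁,…,X_m` are independent and
uniform on `{0,1}`: `p_X(z) = 2^{-m}·|{ε ∈ {0,1}^m : ε₁h₁+⋯+ε_mh_m = z}|`. -/
noncomputable def pX {m : ℕ} (h : Fin m → ℤ) (z : ℤ) : ℝ :=
  ((Finset.univ.filter fun ε : Fin m → Bool =>
      (∑ i ∈ Finset.univ.filter (fun i => ε i = true), h i) = z).card : ℝ) / 2 ^ m

/-- Probability mass function of the binomial distribution `B(m,1/2)`. -/
noncomputable def pY (m : ℕ) (z : ℤ) : ℝ :=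
  if 0 ≤ z ∧ z ≤ m then (m.choose z.toNat : ℝ) / 2 ^ m else 0

/-!
Replacing `εᵢ` by `1 - εᵢ` for the negative weights only translates `X`, so we may assume all
`hᵢ > 0`. Then subset sums strictly increase along inclusion, so each fibre
`{E ⊆ [m] | ∑_{i ∈ E} hᵢ = z}` is an antichain, and the subsets with sum in `S` form a union of
`|S|` antichains. By the LYM inequality their layer sizes `a_r ≤ C(m,r)` satisfy
`∑ a_r / C(m,r) ≤ |S|`, and a fractional knapsack argument bounds `∑ a_r` by the sum of the
`|S|` largest binomial coefficients.

Equal level sets force supports of equal size. If `|hᵢ| < |hⱼ|`, the pair `{i, j}` already has the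
four subset sums `0 < |hᵢ| < |hⱼ| < |hᵢ| + |hⱼ|` and each further index adds a new largest one,
so `X` takes at least `m + 2` values while `Y` takes `m + 1`. Conversely, if all `|hᵢ| = a`, then
`X` is the image of `Y` under the injective map `j ↦ a j - c`, where `c = ∑_{hᵢ < 0} |hᵢ|`.
-/

open Finset Function
open scoped symmDiff

theorem exists_subset_card_eq_forall_le {α β : Type*} [DecidableEq α] [LinearOrder β]
    (f : α → β) {k : ℕ} {U : Finset α} (hk : k ≤ #U) :
    ∃ T ⊆ U, #T = k ∧ ∀ i ∈ T, ∀ j ∈ U \ T, f j ≤ f i := by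
  induction k generalizing U with
  | zero => exact ⟨∅, empty_subset _, rfl, by simp⟩
  | succ k ih =>
    obtain ⟨i, hiU, hmax⟩ := U.exists_max_image f (card_pos.1 (by omega))
    obtain ⟨T, hTU, hT, htop⟩ := ih (U := U.erase i) (by rw [card_erase_of_mem hiU]; omega)
    have hiT : i ∉ T := fun hi => by simpa using hTU hi
    refine ⟨insert i T, insert_subset hiU (hTU.trans (erase_subset i U)), by
      rw [card_insert_of_notMem hiT, hT], ?_⟩
    intro x hx j hj
    simp only [mem_sdiff, mem_insert, not_or] at hj
    rcases mem_insert.1 hx with rfl | hx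
    · exact hmax j hj.1
    · exact htop x hx j (by simp [hj.1, hj.2.1, hj.2.2])

theorem sum_mul_le_sum_of_forall_le {α : Type*} [DecidableEq α] {U T : Finset α} {c t : α → ℝ}
    (hTU : T ⊆ U) (hc : ∀ i ∈ U, 0 ≤ c i) (ht₀ : ∀ i ∈ U, 0 ≤ t i) (ht₁ : ∀ i ∈ U, t i ≤ 1)
    (htop : ∀ i ∈ T, ∀ j ∈ U \ T, c j ≤ c i) (hsum : ∑ i ∈ U, t i ≤ #T) :
    ∑ i ∈ U, c i * t i ≤ ∑ i ∈ T, c i := by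
  rcases T.eq_empty_or_nonempty with rfl | hT
  · have ht : ∀ i ∈ U, t i = 0 :=
      (sum_eq_zero_iff_of_nonneg ht₀).1 (le_antisymm (by simpa using hsum) (sum_nonneg ht₀))
    rw [sum_eq_zero fun i hi => by rw [ht i hi, mul_zero], sum_empty]
  obtain ⟨i₀, hi₀, hmin⟩ := T.exists_min_image c hT
  -- `l = min_T c` separates the values of `c` on `T` from those on `U \ T`
  set l := c i₀
  have hsdiff : ∑ i ∈ U \ T, t i = ∑ i ∈ U, t i - ∑ i ∈ T, t i := by
    rw [eq_sub_iff_add_eq, sum_sdiff hTU]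
  calc ∑ i ∈ U, c i * t i = ∑ i ∈ U \ T, c i * t i + ∑ i ∈ T, c i * t i := (sum_sdiff hTU).symm
    _ ≤ ∑ i ∈ U \ T, l * t i + ∑ i ∈ T, c i * t i := by
        gcongr with j hj
        · exact ht₀ j (mem_sdiff.1 hj).1
        · exact htop i₀ hi₀ j hj
    _ ≤ l * (#T - ∑ i ∈ T, t i) + ∑ i ∈ T, c i * t i := by
        rw [← mul_sum, hsdiff]
        gcongr
        exact hc i₀ (hTU hi₀)
    _ = ∑ i ∈ T, (l * (1 - t i) + c i * t i) := by
        rw [sum_add_distrib, ← mul_sum, sum_sub_distrib]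
        simp
    _ ≤ ∑ i ∈ T, (c i * (1 - t i) + c i * t i) := by
        gcongr with i hi
        · linarith [ht₁ i (hTU hi)]
        · exact hmin i hi
    _ = ∑ i ∈ T, c i := by simp only [← mul_add, sub_add_cancel, mul_one]

section Sperner

variable {α β : Type*} [Fintype α] [DecidableEq β] {𝒜 : Finset (Finset α)}
  {S : Finset β} {f : Finset α → β}

theorem sum_card_slice_div_choose_le_card (hf : ∀ A ∈ 𝒜, f A ∈ S)
    (h𝒜 : ∀ b ∈ S, IsAntichain (· ⊆ ·) (↑{A ∈ 𝒜 | f A = b} : Set (Finset α))) :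
    ∑ r ∈ range (Fintype.card α + 1), (#(𝒜 # r) / (Fintype.card α).choose r : ℝ) ≤ #S := by
  calc ∑ r ∈ range (Fintype.card α + 1), (#(𝒜 # r) / (Fintype.card α).choose r : ℝ)
      = ∑ b ∈ S, ∑ r ∈ range (Fintype.card α + 1),
          (#({A ∈ 𝒜 | f A = b} # r) / (Fintype.card α).choose r : ℝ) := by
        rw [sum_comm]
        refine sum_congr rfl fun r _ => ?_
        rw [← sum_div, card_eq_sum_card_fiberwise fun A hA => hf A (slice_subset hA)]
        push_cast
        congr 2 with b
        congr 2
        ext A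
        simp only [mem_filter, mem_slice]
        tauto
    _ ≤ ∑ b ∈ S, 1 := sum_le_sum fun b hb => sum_card_slice_div_choose_le_one (h𝒜 b hb)
    _ = #S := by simp

/-- Erdős's extension of Sperner's theorem to unions of `#S` antichains (the fibres of `f`). -/
theorem exists_card_eq_card_le_sum_choose (hf : ∀ A ∈ 𝒜, f A ∈ S)
    (h𝒜 : ∀ b ∈ S, IsAntichain (· ⊆ ·) (↑{A ∈ 𝒜 | f A = b} : Set (Finset α))) :
    ∃ T : Finset ℕ, #T = #S ∧ #𝒜 ≤ ∑ r ∈ T, (Fintype.card α).choose r := by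
  set n := Fintype.card α
  -- the layers `r > n` are empty; they only make room for `#S` indices
  set U := range (n + 1 + #S)
  obtain ⟨T, hTU, hT, htop⟩ :=
    exists_subset_card_eq_forall_le (n.choose ·) (k := #S) (U := U) (by simp [U])
  refine ⟨T, hT, ?_⟩
  have hslice (r : ℕ) : #(𝒜 # r) ≤ n.choose r := (sized_slice (𝒜 := 𝒜)).card_le
  have hcard : #𝒜 = ∑ r ∈ U, #(𝒜 # r) :=
    card_eq_sum_card_fiberwise fun A _ => by
      have := A.card_le_univ
      simp only [U, coe_range, Set.mem_Iio]
      omega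
  have hmul (r : ℕ) : (n.choose r : ℝ) * (#(𝒜 # r) / n.choose r) = #(𝒜 # r) := by
    rcases eq_or_ne (n.choose r) 0 with hr | hr
    · have : #(𝒜 # r) = 0 := by have := hslice r; omega
      simp [this]
    · exact mul_div_cancel₀ _ (by exact_mod_cast hr)
  have hlym : ∑ r ∈ U, (#(𝒜 # r) / n.choose r : ℝ) ≤ #T := by
    rw [hT, ← sum_subset (range_subset_range.2 (by omega : n + 1 ≤ n + 1 + #S))]
    · exact sum_card_slice_div_choose_le_card hf h𝒜
    · intro r _ hr
      rw [Nat.choose_eq_zero_of_lt (by simpa using hr : n < r)]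
      simp
  have := sum_mul_le_sum_of_forall_le (c := fun r => (n.choose r : ℝ)) hTU
    (fun _ _ => by positivity) (fun _ _ => by positivity)
    (fun r _ => div_le_one_of_le₀ (by exact_mod_cast hslice r) (by positivity))
    (fun i hi j hj => by exact_mod_cast htop i hi j hj) hlym
  simp only [hmul] at this
  rw [hcard]
  exact_mod_cast this

end Sperner

section LevelSets

variable {α β : Type*} {p : α → ℝ} {q : β → ℝ}

theorem ncard_setOf_eq_of_comp_eq {f : β → α} (hf : Injective f) (hpq : ∀ j, p (f j) = q j)
    (hp : ∀ z, p z ≠ 0 → z ∈ Set.range f) {v : ℝ} (hv : v ≠ 0) :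
    {z | p z = v}.ncard = {j | q j = v}.ncard := by
  have : {z | p z = v} = f '' {j | q j = v} := by
    ext z
    constructor
    · intro hz
      obtain ⟨j, rfl⟩ := hp z (by rw [show p z = v from hz]; exact hv)
      exact ⟨j, (hpq j).symm.trans hz, rfl⟩
    · rintro ⟨j, hj, rfl⟩
      exact (hpq j).trans hj
  rw [this, Set.ncard_image_of_injective _ hf]

theorem ncard_support_eq_sum_ncard_setOf_eq (hp : (support p).Finite) {V : Finset ℝ}
    (hV : 0 ∉ V) (hpV : ∀ z, p z ≠ 0 → p z ∈ V) :
    (support p).ncard = ∑ v ∈ V, {z | p z = v}.ncard := by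
  rw [Set.ncard_eq_toFinset_card _ hp,
    card_eq_sum_card_fiberwise fun z hz => hpV z (by simpa using hz)]
  refine sum_congr rfl fun v hv => ?_
  rw [← Set.ncard_coe_finset]
  congr 1
  ext z
  simp only [coe_filter, Set.Finite.mem_toFinset, mem_support, Set.mem_ofPred_eq]
  exact ⟨fun h => h.2, fun h => ⟨h ▸ ne_of_mem_of_not_mem hv hV, h⟩⟩

theorem ncard_support_eq_of_ncard_setOf_eq (hp : (support p).Finite) (hq : (support q).Finite)
    (hpq : ∀ v ≠ 0, {z | p z = v}.ncard = {j | q j = v}.ncard) :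
    (support p).ncard = (support q).ncard := by
  set V := {v ∈ hp.toFinset.image p ∪ hq.toFinset.image q | v ≠ 0}
  have hV : 0 ∉ V := by simp [V]
  rw [ncard_support_eq_sum_ncard_setOf_eq hp hV fun z hz =>
      mem_filter.2 ⟨mem_union_left _ (mem_image_of_mem p (hp.mem_toFinset.2 hz)), hz⟩,
    ncard_support_eq_sum_ncard_setOf_eq hq hV fun z hz =>
      mem_filter.2 ⟨mem_union_right _ (mem_image_of_mem q (hq.mem_toFinset.2 hz)), hz⟩]
  exact sum_congr rfl fun v hv => hpq v (ne_of_mem_of_not_mem hv hV)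

end LevelSets

section SubsetSums

variable {ι : Type*} (g : ι → ℤ)

def sumFiber [Fintype ι] (z : ℤ) : Finset (Finset ι) := {E | ∑ i ∈ E, g i = z}

def subsetSums [DecidableEq ι] (s : Finset ι) : Finset ℤ := s.powerset.image (∑ i ∈ ·, g i)

def negIndices [Fintype ι] : Finset ι := {i | g i < 0}

variable {g}

theorem strictMono_sum_of_pos (hg : ∀ i, 0 < g i) : StrictMono (∑ i ∈ ·, g i) := fun _ _ hEF => by
  obtain ⟨i, hiF, hiE⟩ := exists_of_ssubset hEF
  exact sum_lt_sum_of_subset hEF.subset hiF hiE (hg i) fun j _ _ => (hg j).le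

theorem isAntichain_setOf_sum_eq (hg : ∀ i, 0 < g i) (z : ℤ) :
    IsAntichain (· ⊆ ·) {E : Finset ι | ∑ i ∈ E, g i = z} := fun _ hE _ hF hne hEF =>
  (strictMono_sum_of_pos hg (lt_of_le_of_ne hEF hne)).ne (hE.trans hF.symm)

theorem sumFiber_nonempty_iff [Fintype ι] [DecidableEq ι] {z : ℤ} :
    (sumFiber g z).Nonempty ↔ z ∈ subsetSums g univ := by
  simp [sumFiber, subsetSums, Finset.Nonempty]

theorem sum_symmDiff_negIndices_abs [Fintype ι] [DecidableEq ι] (h : ι → ℤ) (E : Finset ι) :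
    ∑ i ∈ E ∆ negIndices h, |h i| = ∑ i ∈ E, h i + ∑ i ∈ negIndices h, |h i| := by
  rw [negIndices, ← univ_inter (E ∆ _), ← univ_inter E, ← sum_ite_mem, ← sum_ite_mem, sum_filter,
    ← sum_add_distrib]
  refine sum_congr rfl fun i _ => ?_
  by_cases hE : i ∈ E <;> by_cases hi : h i < 0 <;>
    simp [mem_symmDiff, hE, hi, abs_of_neg, abs_of_nonneg, not_lt.1]

theorem card_sumFiber_eq_card_sumFiber_abs [Fintype ι] [DecidableEq ι] (h : ι → ℤ) (z : ℤ) :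
    #(sumFiber h z) = #(sumFiber (|h ·|) (z + ∑ i ∈ negIndices h, |h i|)) := by
  refine card_nbij' (· ∆ negIndices h) (· ∆ negIndices h) (fun E hE => ?_) (fun E hE => ?_)
    (fun E _ => symmDiff_symmDiff_cancel_right _ _) (fun E _ => symmDiff_symmDiff_cancel_right _ _)
  · simp only [sumFiber, coe_filter, mem_univ, true_and, Set.mem_ofPred_eq] at hE ⊢
    rw [sum_symmDiff_negIndices_abs, hE]
  · simp only [sumFiber, coe_filter, mem_univ, true_and, Set.mem_ofPred_eq] at hE ⊢
    have := sum_symmDiff_negIndices_abs h (E ∆ negIndices h)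
    rw [symmDiff_symmDiff_cancel_right] at this
    omega

theorem sumFiber_mul_of_forall_eq [Fintype ι] {a : ℤ} (ha : a ≠ 0) (hg : ∀ i, g i = a) (j : ℤ) :
    sumFiber g (a * j) = sumFiber 1 j := by
  ext E
  simp [sumFiber, hg, ha, mul_comm]

theorem sumFiber_one [Fintype ι] (j : ℤ) :
    sumFiber (1 : ι → ℤ) j = ({E | (#E : ℤ) = j} : Finset (Finset ι)) := by
  simp [sumFiber]

theorem dvd_of_mem_sumFiber [Fintype ι] {a z : ℤ} (hg : ∀ i, g i = a) {E : Finset ι}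
    (hE : E ∈ sumFiber g z) : a ∣ z := by
  simp only [sumFiber, mem_filter, hg, sum_const, nsmul_eq_mul] at hE
  exact ⟨#E, by rw [← hE.2, mul_comm]⟩

theorem card_subsetSums_lt_card_insert [DecidableEq ι] (hg : ∀ i, 0 < g i) {s : Finset ι} {a : ι}
    (ha : a ∉ s) :
    #(subsetSums g s) < #(subsetSums g (insert a s)) := by
  have hnew : ∑ i ∈ insert a s, g i ∉ subsetSums g s := by
    simp only [subsetSums, mem_image, mem_powerset, not_exists, not_and, sum_insert ha]
    intro E hE hsum
    have := sum_le_sum_of_subset_of_nonneg hE fun i _ _ => (hg i).le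
    linarith [hg a]
  exact card_lt_card ⟨image_subset_image (powerset_mono.2 (subset_insert a s)),
    fun hsub => hnew (hsub (mem_image_of_mem _ (mem_powerset_self _)))⟩

theorem card_subsetSums_add_card_le [DecidableEq ι] (hg : ∀ i, 0 < g i) (s : Finset ι)
    {t : Finset ι} (hst : Disjoint s t) : #(subsetSums g s) + #t ≤ #(subsetSums g (s ∪ t)) := by
  induction t using Finset.induction_on with
  | empty => simp
  | insert a t hat ih =>
    have has : a ∉ s ∪ t := by
      simp only [mem_union, not_or]
      exact ⟨disjoint_right.1 hst (mem_insert_self a t), hat⟩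
    rw [card_insert_of_notMem hat, union_insert]
    have := card_subsetSums_lt_card_insert hg has
    have := ih (disjoint_of_subset_right (subset_insert a t) hst)
    omega

theorem card_subsetSums_pair [DecidableEq ι] (hg : ∀ i, 0 < g i) {i j : ι} (hij : g i < g j) :
    4 ≤ #(subsetSums g {i, j}) := by
  have hne : i ≠ j := fun h => hij.ne (congrArg g h)
  have hsub : {0, g i, g j, g i + g j} ⊆ subsetSums g {i, j} := by
    intro z hz
    simp only [mem_insert, mem_singleton] at hz
    simp only [subsetSums, mem_image, mem_powerset]
    rcases hz with rfl | rfl | rfl | rfl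
    · exact ⟨∅, empty_subset _, sum_empty⟩
    · exact ⟨{i}, by simp, sum_singleton _ _⟩
    · exact ⟨{j}, by simp, sum_singleton _ _⟩
    · exact ⟨{i, j}, subset_rfl, sum_pair hne⟩
  refine le_trans ?_ (card_le_card hsub)
  have := hg i
  rw [card_insert_of_notMem (by simp only [mem_insert, mem_singleton]; omega),
    card_insert_of_notMem (by simp only [mem_insert, mem_singleton]; omega), card_pair (by omega)]

theorem card_add_two_le_card_subsetSums [Fintype ι] [DecidableEq ι] (hg : ∀ i, 0 < g i)
    {i j : ι} (hij : g i < g j) : Fintype.card ι + 2 ≤ #(subsetSums g univ) := by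
  have hne : i ≠ j := fun h => hij.ne (congrArg g h)
  have := card_subsetSums_add_card_le hg {i, j} (disjoint_sdiff (t := univ))
  rw [union_sdiff_of_subset (subset_univ _), card_sdiff_of_subset (subset_univ _), card_univ,
    card_pair hne] at this
  have := card_subsetSums_pair hg hij
  have : 2 ≤ Fintype.card ι := by simpa [card_pair hne] using card_le_univ {i, j}
  omega

end SubsetSums

theorem pX_eq_card_sumFiber {m : ℕ} (h : Fin m → ℤ) (z : ℤ) :
    pX h z = #(sumFiber h z) / 2 ^ m := by
  rw [pX]
  congr 2
  refine card_nbij' (fun ε => ({i | ε i = true} : Finset (Fin m))) (fun E i => decide (i ∈ E))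
    ?_ ?_ ?_ ?_ <;> intro _ _ <;> simp_all [sumFiber]

theorem pX_eq_pX_abs {m : ℕ} (h : Fin m → ℤ) (z : ℤ) :
    pX h z = pX (|h ·|) (z + ∑ i ∈ negIndices h, |h i|) := by
  rw [pX_eq_card_sumFiber, pX_eq_card_sumFiber, card_sumFiber_eq_card_sumFiber_abs]

theorem pX_mul_of_forall_eq {m : ℕ} {g : Fin m → ℤ} {a : ℤ} (ha : a ≠ 0) (hg : ∀ i, g i = a)
    (j : ℤ) : pX g (a * j) = pX (1 : Fin m → ℤ) j := by
  rw [pX_eq_card_sumFiber, pX_eq_card_sumFiber, sumFiber_mul_of_forall_eq ha hg]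

theorem support_pX {m : ℕ} (g : Fin m → ℤ) : support (pX g) = subsetSums g univ := by
  ext z
  simp [pX_eq_card_sumFiber, ← sumFiber_nonempty_iff, Finset.nonempty_iff_ne_empty]

theorem pY_natCast (m r : ℕ) : pY m r = m.choose r / 2 ^ m := by
  rw [pY]
  split_ifs with hr
  · simp
  · rw [Nat.choose_eq_zero_of_lt (by omega)]
    simp

theorem pY_eq_pX_one (m : ℕ) (j : ℤ) : pY m j = pX (1 : Fin m → ℤ) j := by
  rw [pX_eq_card_sumFiber, sumFiber_one]
  rcases lt_or_ge j 0 with hj | hj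
  · rw [pY, if_neg (by omega), filter_false_of_mem fun E _ => by omega]
    simp
  · lift j to ℕ using hj
    rw [pY_natCast]
    simp only [Nat.cast_inj]
    rw [show ({E | #E = j} : Finset (Finset (Fin m))) = powersetCard j univ by
      ext; simp, card_powersetCard, card_univ, Fintype.card_fin]

theorem ncard_support_pY (m : ℕ) : (support (pY m)).ncard = m + 1 := by
  have : support (pY m) = Icc (0 : ℤ) m := by
    ext j
    simp only [pY, mem_support, coe_Icc, Set.mem_Icc]
    split_ifs with hj
    · simp [hj, (Nat.choose_pos (by omega : j.toNat ≤ m)).ne']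
    · simpa using hj
  rw [this, Set.ncard_coe_finset, Int.card_Icc]
  omega

theorem exists_card_eq_sum_pX_le_sum_pY_of_pos {m : ℕ} {g : Fin m → ℤ} (hg : ∀ i, 0 < g i)
    (S : Finset ℤ) : ∃ T : Finset ℤ, #T = #S ∧ ∑ z ∈ S, pX g z ≤ ∑ j ∈ T, pY m j := by
  set 𝒜 : Finset (Finset (Fin m)) := {E | ∑ i ∈ E, g i ∈ S}
  obtain ⟨T, hT, h𝒜⟩ := exists_card_eq_card_le_sum_choose (𝒜 := 𝒜) (f := (∑ i ∈ ·, g i))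
    (fun E hE => (mem_filter.1 hE).2)
    (fun z _ => (isAntichain_setOf_sum_eq hg z).subset fun E hE => (mem_filter.1 hE).2)
  refine ⟨T.map Nat.castEmbedding, by rw [card_map, hT], ?_⟩
  have hS : ∑ z ∈ S, #(sumFiber g z) = #𝒜 := by
    rw [card_eq_sum_card_fiberwise (s := 𝒜) (t := S) (f := (∑ i ∈ ·, g i))
      fun E hE => (mem_filter.1 hE).2]
    refine sum_congr rfl fun z hz => congrArg card ?_
    ext E
    simp only [sumFiber, 𝒜, mem_filter, mem_univ, true_and]
    exact ⟨fun h => ⟨h ▸ hz, h⟩, fun h => h.2⟩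
  calc ∑ z ∈ S, pX g z = #𝒜 / 2 ^ m := by
        simp only [pX_eq_card_sumFiber, ← sum_div, ← hS, Nat.cast_sum]
    _ ≤ (∑ r ∈ T, m.choose r : ℕ) / 2 ^ m := by
        gcongr
        simpa using h𝒜
    _ = ∑ j ∈ T.map Nat.castEmbedding, pY m j := by
        simp [sum_map, pY_natCast, sum_div]

theorem exists_card_eq_sum_pX_le_sum_pY {m : ℕ} {h : Fin m → ℤ} (hh : ∀ i, h i ≠ 0)
    (S : Finset ℤ) : ∃ T : Finset ℤ, #T = #S ∧ ∑ z ∈ S, pX h z ≤ ∑ j ∈ T, pY m j := by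
  obtain ⟨T, hT, hle⟩ := exists_card_eq_sum_pX_le_sum_pY_of_pos (fun i => abs_pos.2 (hh i))
    (S.map (addRightEmbedding (∑ i ∈ negIndices h, |h i|)))
  refine ⟨T, by rw [hT, card_map], ?_⟩
  simpa [sum_map, ← pX_eq_pX_abs] using hle

theorem ncard_setOf_pX_eq_pX_abs {m : ℕ} (h : Fin m → ℤ) {v : ℝ} (hv : v ≠ 0) :
    {z | pX h z = v}.ncard = {z | pX (|h ·|) z = v}.ncard :=
  ncard_setOf_eq_of_comp_eq (f := (· - ∑ i ∈ negIndices h, |h i|)) (sub_left_injective)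
    (fun w => by rw [pX_eq_pX_abs, sub_add_cancel])
    (fun z _ => ⟨z + ∑ i ∈ negIndices h, |h i|, add_sub_cancel_right _ _⟩) hv

theorem forall_abs_eq_of_ncard_setOf_pX_eq {m : ℕ} {h : Fin m → ℤ} (hh : ∀ i, h i ≠ 0)
    (hlev : ∀ v : ℝ, v ≠ 0 → {z : ℤ | pX h z = v}.ncard = {z : ℤ | pY m z = v}.ncard) :
    ∀ i j, |h i| = |h j| := by
  have hsupp : #(subsetSums (|h ·|) univ) = m + 1 := by
    rw [← ncard_support_pY m, ← Set.ncard_coe_finset, ← support_pX]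
    refine ncard_support_eq_of_ncard_setOf_eq ?_ ?_
      fun v hv => (ncard_setOf_pX_eq_pX_abs h hv).symm.trans (hlev v hv)
    · rw [support_pX]
      exact finite_toSet _
    · exact Set.finite_of_ncard_ne_zero (by rw [ncard_support_pY]; omega)
  by_contra! ⟨i, j, hij⟩
  obtain ⟨i, j, hlt⟩ : ∃ i j, |h i| < |h j| := hij.lt_or_gt.elim (⟨i, j, ·⟩) (⟨j, i, ·⟩)
  have := card_add_two_le_card_subsetSums (fun i => abs_pos.2 (hh i)) hlt
  rw [Fintype.card_fin] at this
  omega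

theorem ncard_setOf_pX_eq_of_forall_abs_eq {m : ℕ} {h : Fin m → ℤ} (hh : ∀ i, h i ≠ 0)
    (habs : ∀ i j, |h i| = |h j|) {v : ℝ} (hv : v ≠ 0) :
    {z : ℤ | pX h z = v}.ncard = {z : ℤ | pY m z = v}.ncard := by
  obtain ⟨a, ha, hconst⟩ : ∃ a ≠ 0, ∀ i, |h i| = a := by
    rcases isEmpty_or_nonempty (Fin m) with _ | ⟨⟨i₀⟩⟩
    · exact ⟨1, one_ne_zero, isEmptyElim⟩
    · exact ⟨|h i₀|, abs_ne_zero.2 (hh i₀), fun i => habs i i₀⟩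
  rw [ncard_setOf_pX_eq_pX_abs h hv]
  refine ncard_setOf_eq_of_comp_eq (f := (a * ·)) (mul_right_injective₀ ha)
    (fun j => by rw [pX_mul_of_forall_eq ha hconst, pY_eq_pX_one]) (fun z hz => ?_) hv
  have : z ∈ subsetSums (|h ·|) univ := by rw [← mem_coe, ← support_pX]; exact hz
  obtain ⟨E, hE⟩ := sumFiber_nonempty_iff.2 this
  obtain ⟨j, rfl⟩ := dvd_of_mem_sumFiber hconst hE
  exact ⟨j, rfl⟩

theorem majorization_littlewood_offord_general (m : ℕ)
    (h : Fin m → ℤ) (hh : ∀ i, h i ≠ 0) :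
    (∀ S : Finset ℤ, ∃ T : Finset ℤ, T.card = S.card ∧
      ∑ z ∈ S, pX h z ≤ ∑ j ∈ T, pY m j) ∧
    ((∀ v : ℝ, v ≠ 0 →
        {z : ℤ | pX h z = v}.ncard = {z : ℤ | pY m z = v}.ncard) ↔
      ∀ i j, |h i| = |h j|) :=
  ⟨exists_card_eq_sum_pX_le_sum_pY hh,
    forall_abs_eq_of_ncard_setOf_pX_eq hh, fun habs _ => ncard_setOf_pX_eq_of_forall_abs_eq hh habs⟩

theorem majorization_littlewood_offord (m : ℕ) (hm : 1 ≤ m)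
    (h : Fin m → ℤ) (hh : ∀ i, h i ≠ 0) :
    (∀ S : Finset ℤ, ∃ T : Finset ℤ, T.card = S.card ∧
      ∑ z ∈ S, pX h z ≤ ∑ j ∈ T, pY m j) ∧
    ((∀ v : ℝ, v ≠ 0 →
        {z : ℤ | pX h z = v}.ncard = {z : ℤ | pY m z = v}.ncard) ↔
      ∀ i j, |h i| = |h j|) :=
  majorization_littlewood_offord_general m h hh
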